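/- arXiv:1708.06833 — 9 statements merged into one kernel-verified Lean document; each statement's English description precedes it below -/
import Mathlib

section
/- Let R be a commutative ring and S ⊆ R a countable multiplicative subset. Then the localization S⁻¹R, viewed as an R-module, has projective dimension at most 1. -/
/-!
Enumerate `S` as a sequence `s₀, s₁, …` in which every element occurs infinitely often. Then
`S⁻¹R` is the colimit of the telescope `R →(s₀) R →(s₁) R → ⋯`, and the standard presentation of
a sequential colimit gives the free resolution
`0 → R^(ℕ) → R^(ℕ) → S⁻¹R → 0`, `eₙ ↦ eₙ - sₙ eₙ₊₁`, `eₙ ↦ 1 / (s₀ ⋯ sₙ₋₁)`.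
Injectivity of the first map is read off coordinatewise; an element of the kernel of the second
map is pushed by the telescope relations into a single coordinate `c eₙ` with `c / (s₀ ⋯ sₙ₋₁) = 0`,
so `u c = 0` for some `u ∈ S`, and pushing further to an index `M ≥ n` with `s_M = u` kills it.
-/

universe u

open Finsupp Filter

namespace Finsupp

variable {R : Type*} [CommRing R] (a : ℕ → R)

noncomputable def telescope : (ℕ →₀ R) →ₗ[R] (ℕ →₀ R) :=
  lsum R fun n => LinearMap.toSpanSingleton R _ (single n 1 - single (n + 1) (a n))

variable {a}

theorem telescope_single (n : ℕ) (r : R) :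
    telescope a (single n r) = single n r - single (n + 1) (r * a n) := by
  simp [telescope, smul_sub, smul_single]

theorem telescope_apply_zero (x : ℕ →₀ R) : telescope a x 0 = x 0 := by
  induction x using Finsupp.induction_linear with
  | zero => simp
  | add x y hx hy => simp [hx, hy]
  | single n r => simp [telescope_single, single_apply]

theorem telescope_apply_succ (x : ℕ →₀ R) (m : ℕ) :
    telescope a x (m + 1) = x (m + 1) - x m * a m := by
  induction x using Finsupp.induction_linear with
  | zero => simp
  | add x y hx hy => simp only [map_add, add_apply, hx, hy]; ring
  | single n r =>
    rcases eq_or_ne n m with rfl | hnm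
    · simp [telescope_single]
    · simp [telescope_single, single_apply, hnm.symm]

theorem telescope_injective : Function.Injective (telescope a) := by
  refine (injective_iff_map_eq_zero _).2 fun x hx => Finsupp.ext fun m => ?_
  induction m with
  | zero => simpa [hx] using (telescope_apply_zero (a := a) x).symm
  | succ m ih => simpa [hx, ih] using (telescope_apply_succ (a := a) x m).symm

theorem single_sub_single_prod_mem_range_telescope {n N : ℕ} (h : n ≤ N) (c : R) :
    single n c - single N (c * ∏ i ∈ Finset.Ico n N, a i) ∈ LinearMap.range (telescope a) := by
  induction N, h using Nat.le_induction with
  | base => simp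
  | succ N hN ih =>
    have hstep : single n c - single (N + 1) (c * ∏ i ∈ Finset.Ico n (N + 1), a i) =
        (single n c - single N (c * ∏ i ∈ Finset.Ico n N, a i)) +
          telescope a (single N (c * ∏ i ∈ Finset.Ico n N, a i)) := by
      rw [telescope_single, Finset.prod_Ico_succ_top hN, mul_assoc]
      abel
    rw [hstep]
    exact add_mem ih (LinearMap.mem_range_self _ _)

theorem single_mem_range_telescope {n M : ℕ} (h : n ≤ M) {c : R} (hc : a M * c = 0) :
    single n c ∈ LinearMap.range (telescope a) := by
  have := single_sub_single_prod_mem_range_telescope (a := a) (h.trans M.le_succ) c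
  rwa [Finset.prod_Ico_succ_top h, mul_comm, mul_assoc, hc, mul_zero, single_zero,
    sub_zero] at this

theorem exists_sub_single_mem_range_telescope (x : ℕ →₀ R) {N : ℕ}
    (h : ∀ k ∈ x.support, k ≤ N) :
    ∃ c : R, x - single N c ∈ LinearMap.range (telescope a) := by
  refine ⟨∑ n ∈ x.support, x n * ∏ i ∈ Finset.Ico n N, a i, ?_⟩
  nth_rw 1 [← Finsupp.sum_single x]
  rw [single_finsetSum, Finsupp.sum, ← Finset.sum_sub_distrib]
  exact Submodule.sum_mem _ fun n hn => single_sub_single_prod_mem_range_telescope (h n hn) _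

end Finsupp

theorem exists_seq_frequently_eq (α : Type*) [Nonempty α] [Countable α] :
    ∃ s : ℕ → α, ∀ x, ∃ᶠ n in atTop, s n = x := by
  obtain ⟨σ, hσ⟩ := exists_surjective_nat α
  refine ⟨fun n => σ n.unpair.1, fun x => frequently_atTop.2 fun N => ?_⟩
  obtain ⟨k, rfl⟩ := hσ x
  exact ⟨Nat.pair k N, Nat.right_le_pair k N, by simp⟩

namespace Localization

variable {R : Type*} [CommRing R] {S : Submonoid R} (s : ℕ → S)

noncomputable def ofTelescope : (ℕ →₀ R) →ₗ[R] Localization S :=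
  lsum R fun n =>
    LinearMap.toSpanSingleton R _ (IsLocalization.mk' _ 1 (∏ i ∈ Finset.range n, s i))

theorem ofTelescope_single (n : ℕ) (r : R) :
    ofTelescope s (single n r) = IsLocalization.mk' _ r (∏ i ∈ Finset.range n, s i) := by
  simp [ofTelescope]

theorem ofTelescope_comp_telescope :
    (ofTelescope s).comp (telescope fun n => (s n : R)) = 0 := by
  refine lhom_ext fun n r => ?_
  rw [LinearMap.comp_apply, telescope_single, map_sub, ofTelescope_single, ofTelescope_single,
    Finset.prod_range_succ, IsLocalization.mk'_cancel, sub_self, LinearMap.zero_apply]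

variable {s}

theorem ofTelescope_surjective (hs : ∀ u, ∃ n, s n = u) :
    Function.Surjective (ofTelescope s) := by
  intro z
  obtain ⟨⟨r, u⟩, rfl⟩ := IsLocalization.mk'_surjective S z
  obtain ⟨n, rfl⟩ := hs u
  refine ⟨single (n + 1) (r * (∏ i ∈ Finset.range n, s i : S)), ?_⟩
  rw [ofTelescope_single, Finset.prod_range_succ, mul_comm (∏ i ∈ Finset.range n, s i),
    IsLocalization.mk'_cancel]

theorem ker_ofTelescope_le_range (hs : ∀ u, ∃ᶠ n in atTop, s n = u) :
    LinearMap.ker (ofTelescope s) ≤ LinearMap.range (telescope fun n => (s n : R)) := by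
  intro y hy
  set N := y.support.sup id
  obtain ⟨c, hc⟩ := exists_sub_single_mem_range_telescope (a := fun n => (s n : R)) y
    (N := N) fun k hk => Finset.le_sup (f := id) hk
  have hcN : ofTelescope s (single N c) = 0 := by
    obtain ⟨w, hw⟩ := hc
    have := LinearMap.congr_fun (ofTelescope_comp_telescope s) w
    rw [LinearMap.comp_apply, hw, map_sub, LinearMap.mem_ker.1 hy] at this
    simpa using this
  rw [ofTelescope_single, IsLocalization.mk'_eq_zero_iff] at hcN
  obtain ⟨u, hu⟩ := hcN
  obtain ⟨M, hNM, rfl⟩ := frequently_atTop.1 (hs u) N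
  rw [← sub_add_cancel y (single N c)]
  exact add_mem hc (single_mem_range_telescope hNM hu)

theorem exact_telescope_ofTelescope (hs : ∀ u, ∃ᶠ n in atTop, s n = u) :
    Function.Exact (telescope fun n => (s n : R)) (ofTelescope s) := by
  refine LinearMap.exact_iff.2 (le_antisymm (ker_ofTelescope_le_range hs) ?_)
  rintro _ ⟨x, rfl⟩
  exact LinearMap.congr_fun (ofTelescope_comp_telescope s) x

end Localization

open Localization in
/-- For a commutative ring `R` and a countable multiplicative subset `S ⊆ R`,
the localization `S⁻¹R` has projective dimension at most `1` as an `R`-module,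
i.e. it admits a projective resolution of length `1`. -/
theorem stmt0 (R : Type u) [CommRing R] (S : Submonoid R) (hS : Countable S) :
    ∃ (P₀ P₁ : Type u) (_ : AddCommGroup P₀) (_ : AddCommGroup P₁)
      (_ : Module R P₀) (_ : Module R P₁)
      (f : P₁ →ₗ[R] P₀) (g : P₀ →ₗ[R] Localization S),
      Module.Projective R P₀ ∧ Module.Projective R P₁ ∧
      Function.Injective f ∧ Function.Surjective g ∧ Function.Exact f g := by
  obtain ⟨s, hs⟩ := exists_seq_frequently_eq S
  exact ⟨ℕ →₀ R, ℕ →₀ R, _, _, _, _, telescope fun n => (s n : R), ofTelescope s,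
    inferInstance, inferInstance, telescope_injective,
    ofTelescope_surjective fun u => (hs u).exists, exact_telescope_ofTelescope hs⟩
end

section
/- Let R be a commutative ring and S ⊆ R a countable multiplicative subset. Then an R-module M is S-divisible (i.e. sM = M for all s ∈ S) if and only if it is S-h-divisible (i.e. the natural evaluation map Hom_R(S⁻¹R, M) → M is surjective). -/
universe u

/-- For a countable multiplicative subset `S` of a commutative ring `R`, an `R`-module `M`
is `S`-divisible (`sM = M` for all `s ∈ S`) iff it is `S`-h-divisible (the evaluation map
`Hom_R(S⁻¹R, M) → M`, `f ↦ f 1`, is surjective). -/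
theorem stmt1 (R : Type u) [CommRing R] (S : Submonoid R) (hS : Countable S)
    (M : Type u) [AddCommGroup M] [Module R M] :
    (∀ s ∈ S, ∀ m : M, ∃ m' : M, s • m' = m) ↔
      Function.Surjective (fun f : Localization S →ₗ[R] M => f 1) := by
  constructor
  · intro hdiv m
    -- enumerate S hitting every element beyond any bound
    have : Nonempty S := ⟨1, S.one_mem⟩
    obtain ⟨e0, he0⟩ := exists_surjective_nat S
    set e : ℕ → S := fun n => e0 (Nat.unpair n).1 with he_def
    have hinf : ∀ (s : S) (b : ℕ), ∃ j, b ≤ j ∧ e j = s := by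
      intro s b
      obtain ⟨a, ha⟩ := he0 s
      exact ⟨Nat.pair a b, Nat.right_le_pair a b, by simp [he_def, Nat.unpair_pair, ha]⟩
    -- the chain of divided elements
    set g : ℕ → M := fun n =>
      Nat.rec m (fun n gn => (hdiv (e n) (e n).2 gn).choose) n with hg_def
    have hg : ∀ n, (e n : R) • g (n + 1) = g n := fun n =>
      (hdiv (e n) (e n).2 (g n)).choose_spec
    -- partial products
    set t : ℕ → S := fun n => ∏ i ∈ Finset.range n, e i with ht_def
    set td : ℕ → ℕ → S := fun n k => ∏ i ∈ Finset.range k, e (n + i) with htd_def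
    have htd_succ : ∀ n k, td n (k + 1) = td n k * e (n + k) := by
      intro n k; simp [htd_def, Finset.prod_range_succ]
    have ht_succ : ∀ n, t (n + 1) = t n * e n := by
      intro n; simp [ht_def, Finset.prod_range_succ]
    have ht_td : ∀ n k, t (n + k) = t n * td n k := by
      intro n k
      induction k with
      | zero => simp [htd_def]
      | succ k ih => rw [← add_assoc, ht_succ, ih, htd_succ, mul_assoc]
    have htd_add : ∀ n a b, td n (a + b) = td n a * td (n + a) b := by
      intro n a b
      induction b with
      | zero => simp [htd_def]
      | succ b ih =>
          rw [← add_assoc, htd_succ, ih, htd_succ, mul_assoc, add_assoc]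
    have hLg : ∀ n k, g n = (td n k : R) • g (n + k) := by
      intro n k
      induction k with
      | zero => simp [htd_def]
      | succ k ih =>
          rw [htd_succ, ih, ← add_assoc, ← hg (n + k), smul_smul, Submonoid.coe_mul]
    -- factor lemma
    have hfac : ∀ (s : S) (n b : ℕ), ∃ k, b ≤ n + k ∧ ∃ D : S, td n k = s * D := by
      intro s n b
      obtain ⟨j, hj, hej⟩ := hinf s (max n b)
      have hn : n ≤ j := le_trans (le_max_left _ _) hj
      have hb : b ≤ j := le_trans (le_max_right _ _) hj
      refine ⟨(j - n) + 1, by omega, td n (j - n), ?_⟩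
      rw [htd_succ]
      have : n + (j - n) = j := by omega
      rw [this, hej, mul_comm]
    -- key well-definedness lemma
    have keyle : ∀ (n n' : ℕ) (r r' : R) (c : S), n ≤ n' →
        (c : R) * (t n' * r) = c * (t n * r') → r • g n = r' • g n' := by
      intro n n' r r' c hle hc
      obtain ⟨k, -, D, hD⟩ := hfac (c * t n) n' 0
      have h1 : g n' = ((td n' k : R)) • g (n' + k) := hLg n' k
      have h2 : g n = ((td n ((n' - n) + k) : R)) • g (n + ((n' - n) + k)) :=
        hLg n ((n' - n) + k)
      have hnn : n + ((n' - n) + k) = n' + k := by omega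
      rw [hnn] at h2
      have h3 : td n ((n' - n) + k) = td n (n' - n) * td n' k := by
        have : n + (n' - n) = n' := by omega
        rw [htd_add, this]
      have h4 : (t n : R) * td n (n' - n) = t n' := by
        have := ht_td n (n' - n)
        have hn2 : n + (n' - n) = n' := by omega
        rw [hn2] at this
        exact_mod_cast congrArg (Subtype.val) this.symm
      rw [h1, h2, smul_smul, smul_smul]
      congr 1
      have hD' : (td n' k : R) = (c : R) * t n * D := by exact_mod_cast congrArg Subtype.val hD
      rw [h3, Submonoid.coe_mul, hD']
      linear_combination (D : R) * hc + r * (c : R) * (D : R) * h4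
    have key : ∀ (n n' : ℕ) (r r' : R) (c : S),
        (c : R) * (t n' * r) = c * (t n * r') → r • g n = r' • g n' := by
      intro n n' r r' c hc
      rcases le_total n n' with h | h
      · exact keyle n n' r r' c h hc
      · exact (keyle n' n r' r c h hc.symm).symm
    -- representation of localization elements
    have hrep : ∀ x : Localization S, ∃ p : R × ℕ, x = Localization.mk p.1 (t p.2) := by
      intro x
      refine Localization.induction_on x ?_
      rintro ⟨r, s⟩
      obtain ⟨j, -, hej⟩ := hinf s 0
      refine ⟨(r * t j, j + 1), ?_⟩
      rw [Localization.mk_eq_mk_iff, Localization.r_iff_exists]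
      refine ⟨1, ?_⟩
      have : (t (j + 1) : R) = t j * s := by
        rw [ht_succ, hej, Submonoid.coe_mul]
      simp only [Submonoid.coe_one, one_mul, this]
      ring
    set F : Localization S → M := fun x => (hrep x).choose.1 • g (hrep x).choose.2 with hF_def
    have Fspec : ∀ (x : Localization S) (r : R) (n : ℕ),
        x = Localization.mk r (t n) → F x = r • g n := by
      intro x r n hx
      have h2 := (hrep x).choose_spec
      have h3 := hx.symm.trans h2
      rw [Localization.mk_eq_mk_iff, Localization.r_iff_exists] at h3
      obtain ⟨c, hc⟩ := h3
      exact (key _ _ _ _ c hc).symm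
    have Fadd : ∀ x y, F (x + y) = F x + F y := by
      intro x y
      obtain ⟨⟨r, n⟩, hx⟩ := hrep x
      obtain ⟨⟨r', n'⟩, hy⟩ := hrep y
      obtain ⟨k, -, D, hD⟩ := hfac (t n) n' 0
      set N := n' + k with hN_def
      have hD' : (td n' k : R) = (t n : R) * D := by exact_mod_cast congrArg Subtype.val hD
      have hN1 : (t N : R) = (t n' : R) * ((t n : R) * D) := by
        have := ht_td n' k
        have := congrArg (Subtype.val) this
        push_cast at this
        rw [hN_def, this, hD']
      have e1 : x + y =
          Localization.mk (((t n : R) * r' + (t n' : R) * r) * D) (t N) := by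
        rw [hx, hy, Localization.add_mk, Localization.mk_eq_mk_iff, Localization.r_iff_exists]
        refine ⟨1, ?_⟩
        simp only [Submonoid.coe_one, one_mul, Submonoid.coe_mul, hN1]
        ring
      have h1 : F x = r • g n := Fspec x r n hx
      have h2 : F y = r' • g n' := Fspec y r' n' hy
      have h3 : F (x + y) = (((t n : R) * r' + (t n' : R) * r) * D) • g N :=
        Fspec _ _ _ e1
      have h4 : r • g n = (r * ((t n' : R) * D)) • g N := by
        refine key n N r _ 1 ?_
        simp only [Submonoid.coe_one, one_mul, hN1]; ring
      have h5 : r' • g n' = (r' * ((t n : R) * D)) • g N := by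
        refine key n' N r' _ 1 ?_
        simp only [Submonoid.coe_one, one_mul, hN1]; ring
      rw [h1, h2, h3, h4, h5, ← add_smul]
      congr 1
      ring
    have Fsmul : ∀ (c : R) (x : Localization S), F (c • x) = c • F x := by
      intro c x
      obtain ⟨⟨r, n⟩, hx⟩ := hrep x
      have h1 : c • x = Localization.mk (c * r) (t n) := by
        rw [hx, Localization.smul_mk, smul_eq_mul]
      rw [Fspec _ _ _ h1, Fspec x r n hx, mul_smul]
    refine ⟨⟨⟨F, Fadd⟩, Fsmul⟩, ?_⟩
    show F 1 = m
    have h0 : (1 : Localization S) = Localization.mk 1 (t 0) := by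
      have : t 0 = 1 := by simp [ht_def]
      rw [this, Localization.mk_one]
    rw [Fspec _ _ _ h0, one_smul]
    rfl
  · intro hsurj s hs m
    obtain ⟨f, hf⟩ := hsurj m
    refine ⟨f (Localization.mk 1 ⟨s, hs⟩), ?_⟩
    rw [← map_smul, Localization.smul_mk, smul_eq_mul, mul_one]
    have : Localization.mk s ⟨s, hs⟩ = 1 := Localization.mk_self ⟨s, hs⟩
    rw [this]
    exact hf
end

section
/- Let R be a commutative ring whose prime spectrum is at most countable, and let S ⊆ R be a multiplicative subset. Then there exists an at most countable multiplicative subset T ⊆ S such that the natural map T⁻¹R → S⁻¹R is an isomorphism. -/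
/-!
`T⁻¹R → S⁻¹R` is an isomorphism as soon as `T ≤ S` and every `s ∈ S` divides an element of `T`.
If `s` divided no element of `T`, the ideal `(s)` would be disjoint from `T`, hence contained in
a prime disjoint from `T`; so it suffices that `T` meets every prime ideal that `S` meets.
Picking one element of `S` in each of the countably many primes meeting `S` and taking the
submonoid they generate gives such a `T`.
-/

universe u

theorem Set.Countable.countable_submonoidClosure {M : Type*} [Monoid M] {s : Set M}
    (hs : s.Countable) : Countable (Submonoid.closure s) := by
  have : Countable s := hs.to_subtype
  have : Countable (FreeMonoid s) := inferInstanceAs (Countable (List s))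
  have hrange : (Submonoid.closure s : Set M).Countable := by
    rw [Submonoid.closure_eq_mrange]
    exact Set.countable_range _
  exact hrange.to_subtype

section

variable {R : Type*} [CommRing R]

theorem Submonoid.exists_dvd_mem_of_forall_isPrime {T : Submonoid R} {x : R}
    (h : ∀ p : Ideal R, p.IsPrime → x ∈ p → ∃ t ∈ T, t ∈ p) : ∃ t ∈ T, x ∣ t := by
  by_contra! hx
  have hdisj : Disjoint (Ideal.span {x} : Set R) T := by
    refine Set.disjoint_left.mpr fun y hy hyT => ?_
    obtain ⟨a, rfl⟩ := Ideal.mem_span_singleton'.mp hy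
    exact hx _ hyT (dvd_mul_left x a)
  obtain ⟨p, hp, hxp, hpT⟩ := Ideal.exists_le_prime_disjoint _ T hdisj
  obtain ⟨t, htT, htp⟩ := h p hp (hxp (Ideal.mem_span_singleton_self x))
  exact Set.disjoint_left.mp hpT htp htT

theorem isLocalization_localization_of_le_of_forall_isPrime {T S : Submonoid R} (hTS : T ≤ S)
    (h : ∀ p : Ideal R, p.IsPrime → (∃ s ∈ S, s ∈ p) → ∃ t ∈ T, t ∈ p) :
    IsLocalization T (Localization S) :=
  (IsLocalization.iff_of_le_of_exists_dvd T S hTS fun s hs =>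
    Submonoid.exists_dvd_mem_of_forall_isPrime fun p hp hsp => h p hp ⟨s, hs, hsp⟩).mpr
    inferInstance

theorem Submonoid.exists_countable_le_forall_isPrime [Countable (PrimeSpectrum R)]
    (S : Submonoid R) : ∃ T : Submonoid R, Countable T ∧ T ≤ S ∧
      ∀ p : Ideal R, p.IsPrime → (∃ s ∈ S, s ∈ p) → ∃ t ∈ T, t ∈ p := by
  have hchoice (p : PrimeSpectrum R) :
      ∃ x ∈ S, (∃ s ∈ S, s ∈ p.asIdeal) → x ∈ p.asIdeal := by
    by_cases hp : ∃ s ∈ S, s ∈ p.asIdeal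
    · obtain ⟨s, hs, hsp⟩ := hp
      exact ⟨s, hs, fun _ => hsp⟩
    · exact ⟨1, S.one_mem, fun h => absurd h hp⟩
  choose f hfS hfp using hchoice
  refine ⟨closure (Set.range f), (Set.countable_range f).countable_submonoidClosure,
    closure_le.mpr (Set.range_subset_iff.mpr hfS), fun p hp hpS => ?_⟩
  exact ⟨f ⟨p, hp⟩, subset_closure ⟨⟨p, hp⟩, rfl⟩, hfp ⟨p, hp⟩ hpS⟩

end

/-- If a commutative ring `R` has (at most) countable prime spectrum, then for any
multiplicative subset `S ⊆ R` there is an (at most) countable multiplicative subset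
`T ⊆ S` such that the natural map `T⁻¹R → S⁻¹R` is an isomorphism, i.e. `S⁻¹R` is
the localization of `R` at `T`. -/
theorem stmt3 (R : Type u) [CommRing R] (hR : Countable (PrimeSpectrum R))
    (S : Submonoid R) :
    ∃ T : Submonoid R, Countable T ∧ T ≤ S ∧ IsLocalization T (Localization S) := by
  obtain ⟨T, hT, hTS, hprime⟩ := S.exists_countable_le_forall_isPrime
  exact ⟨T, hT, hTS, isLocalization_localization_of_le_of_forall_isPrime hTS hprime⟩
end

section
/- Let R be a commutative ring and S ⊆ R a multiplicative subset such that the S-torsion in R is bounded, i.e., there exists s₀ ∈ S with s₀·Γ_S(R) = 0, where Γ_S(R) is the ideal of elements of R annihilated by some element of S. Then for any flat R-module F, one has Hom_R(S⁻¹R/R, F) = 0. -/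
universe u

open TensorProduct

lemma flat_bounded_torsion {R : Type u} [CommRing R] {S : Submonoid R} {s₀ : R}
    (hs₀ : ∀ r : R, (∃ s ∈ S, s * r = 0) → s₀ * r = 0)
    (F : Type u) [AddCommGroup F] [Module R F] [Module.Flat R F]
    (x : F) (s : R) (hs : s ∈ S) (hx : s • x = 0) : s₀ • x = 0 := by
  set g : R →ₗ[R] R := LinearMap.lsmul R R s with hg
  have hexact : Function.Exact ((LinearMap.ker g).subtype) g :=
    LinearMap.exact_subtype_ker_map g
  have hT := Module.Flat.lTensor_exact F hexact
  have h1 : (LinearMap.lTensor F g) (x ⊗ₜ[R] 1) = 0 := by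
    have h0 : (x ⊗ₜ[R] (s : R) : F ⊗[R] R) = 0 := by
      apply (TensorProduct.rid R F).injective
      simpa using hx
    simpa [hg, LinearMap.lTensor_tmul] using h0
  obtain ⟨t, ht⟩ := (hT _).mp h1
  have key : ∀ t : F ⊗[R] (LinearMap.ker g),
      s₀ • (TensorProduct.rid R F ((LinearMap.lTensor F (LinearMap.ker g).subtype) t)) = 0 := by
    intro t
    induction t using TensorProduct.induction_on with
    | zero => simp
    | tmul a k =>
        have hk : s * (k : R) = 0 := by
          have h0 : s • (k : R) = 0 := k.2
          simpa [smul_eq_mul] using h0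
        have h2 : s₀ * (k : R) = 0 := hs₀ _ ⟨s, hs, hk⟩
        simp [LinearMap.lTensor_tmul, TensorProduct.rid_tmul, smul_smul, h2]
    | add a b ha hb => simp only [map_add, smul_add, ha, hb, add_zero]
  have hkey := key t
  rw [ht] at hkey
  simpa using hkey

/-- If the `S`-torsion in `R` is bounded (some `s₀ ∈ S` annihilates all elements of `R`
killed by some element of `S`), then `Hom_R(S⁻¹R/R, F) = 0` for every flat `R`-module `F`.
Here `S⁻¹R/R` is the cokernel of the localization map `R → S⁻¹R`. -/
theorem stmt4 (R : Type u) [CommRing R] (S : Submonoid R)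
    (hbdd : ∃ s₀ ∈ S, ∀ r : R, (∃ s ∈ S, s * r = 0) → s₀ * r = 0)
    (F : Type u) [AddCommGroup F] [Module R F] [Module.Flat R F] :
    Subsingleton
      ((Localization S ⧸ LinearMap.range (Algebra.linearMap R (Localization S))) →ₗ[R] F) := by
  obtain ⟨s₀, hs₀S, hs₀⟩ := hbdd
  suffices h : ∀ φ : (Localization S ⧸ LinearMap.range (Algebra.linearMap R (Localization S))) →ₗ[R] F, φ = 0 by
    exact ⟨fun φ ψ => by rw [h φ, h ψ]⟩
  intro φ
  have key : ∀ y : Localization S, φ (Submodule.Quotient.mk y) = 0 := by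
    intro y
    induction y using Localization.induction_on with
    | H p =>
      obtain ⟨r, s⟩ := p
      have hq' : ∃ q' : Localization S ⧸ LinearMap.range (Algebra.linearMap R (Localization S)),
          q' = Submodule.Quotient.mk (Localization.mk r (s * ⟨s₀, hs₀S⟩)) := ⟨_, rfl⟩
      obtain ⟨q', hq'⟩ := hq'
      have hdiv : (Submodule.Quotient.mk (Localization.mk r s) :
          Localization S ⧸ LinearMap.range (Algebra.linearMap R (Localization S))) = s₀ • q' := by
        rw [hq', ← Submodule.Quotient.mk_smul]
        congr 1
        rw [Localization.smul_mk, Localization.mk_eq_mk_iff, Localization.r_iff_exists]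
        exact ⟨1, by rw [smul_eq_mul]; push_cast; ring⟩
      have htor : ((s : R) * s₀) • q' = 0 := by
        rw [hq', ← Submodule.Quotient.mk_smul, Submodule.Quotient.mk_eq_zero]
        rw [Localization.smul_mk]
        exact ⟨r, by
          rw [Algebra.linearMap_apply, ← Localization.mk_one_eq_algebraMap,
            Localization.mk_eq_mk_iff, Localization.r_iff_exists]
          exact ⟨1, by simp only [smul_eq_mul]; push_cast; ring⟩⟩
      have h2 : ((s : R) * s₀) • φ q' = 0 := by rw [← map_smul, htor, map_zero]
      have h3 : s₀ • φ q' = 0 :=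
        flat_bounded_torsion hs₀ F (φ q') ((s : R) * s₀) (S.mul_mem s.2 hs₀S) h2
      rw [hdiv, map_smul, h3]
  ext q
  simpa using key q
end

section
/- Let R be a commutative ring and S, T ⊆ R two multiplicative subsets. Let S' denote the image of S under the localization homomorphism R → T⁻¹R. If the S-torsion in R is bounded, then the S'-torsion in T⁻¹R is bounded. -/
universe u

/-- If the `S`-torsion in `R` is bounded, then the `S'`-torsion in `T⁻¹R` is bounded,
where `S'` is the image of `S` under the localization map `R → T⁻¹R`. -/
theorem stmt5 (R : Type u) [CommRing R] (S T : Submonoid R)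
    (hbdd : ∃ s₀ ∈ S, ∀ r : R, (∃ s ∈ S, s * r = 0) → s₀ * r = 0) :
    ∃ s₀' ∈ S.map (algebraMap R (Localization T)).toMonoidHom,
      ∀ x : Localization T,
        (∃ s' ∈ S.map (algebraMap R (Localization T)).toMonoidHom, s' * x = 0) →
          s₀' * x = 0 := by
  obtain ⟨s₀, hs₀S, hs₀⟩ := hbdd
  refine ⟨algebraMap R (Localization T) s₀, ⟨s₀, hs₀S, rfl⟩, ?_⟩
  rintro x ⟨_, ⟨s, hsS, rfl⟩, hx⟩
  simp only [RingHom.toMonoidHom_eq_coe, MonoidHom.coe_coe] at hx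
  induction x using Localization.induction_on with
  | H p =>
    obtain ⟨r, t⟩ := p
    rw [Localization.mk_eq_mk', ← IsLocalization.mk'_one (M := T) (Localization T) s,
      ← IsLocalization.mk'_mul, one_mul, IsLocalization.mk'_eq_zero_iff] at hx
    obtain ⟨u, hu⟩ := hx
    rw [Localization.mk_eq_mk', ← IsLocalization.mk'_one (M := T) (Localization T) s₀,
      ← IsLocalization.mk'_mul, one_mul, IsLocalization.mk'_eq_zero_iff]
    refine ⟨u, ?_⟩
    have := hs₀ ((u : R) * r) ⟨s, hsS, by linear_combination hu⟩
    linear_combination this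
end

section
/- Let P be a principal ideal domain with field of fractions Q, let R = P[x], and let T ⊆ R be the multiplicative subset of polynomials of content 1 (i.e., whose coefficients generate the unit ideal of P). Then for any prime element s ∈ P, the ring (R/sR) ⊗_R T⁻¹R is isomorphic to the field of rational functions k(x), where k = P/sP. -/
universe u

attribute [local instance] Algebra.TensorProduct.rightAlgebra

set_option maxHeartbeats 1000000 in
set_option synthInstance.maxHeartbeats 400000 in
open Polynomial in
/-- Let `P` be a PID, `R = P[x]`, and `T ⊆ P[x]` the multiplicative subset of polynomials
of content `1` (coefficients generating the unit ideal). Then for any prime element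
`s ∈ P`, the ring `(R/sR) ⊗_R T⁻¹R` is isomorphic to the field of rational functions
`k(x)` with `k = P/sP`. -/
theorem stmt8 (P : Type u) [CommRing P] [IsDomain P] [IsPrincipalIdealRing P]
    (T : Submonoid (Polynomial P))
    (hT : ∀ p : Polynomial P, p ∈ T ↔ Ideal.span (Set.range p.coeff) = ⊤)
    (s : P) (hs : Prime s) :
    haveI : (Ideal.span {s}).IsPrime := (Ideal.span_singleton_prime hs.ne_zero).mpr hs
    Nonempty
      ((TensorProduct (Polynomial P)
          (Polynomial P ⧸ Ideal.span {Polynomial.C s}) (Localization T)) ≃+*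
        RatFunc (P ⧸ Ideal.span {s})) := by
  classical
  haveI : (Ideal.span {s}).IsPrime := (Ideal.span_singleton_prime hs.ne_zero).mpr hs
  haveI hmax : (Ideal.span {s}).IsMaximal :=
    PrincipalIdealRing.isMaximal_of_irreducible hs.irreducible
  letI : Field (P ⧸ Ideal.span {s}) := Ideal.Quotient.field _
  set q : P →+* P ⧸ Ideal.span {s} := Ideal.Quotient.mk (Ideal.span {s}) with hq
  have h1 : Ideal.span {Polynomial.C s}
      = Ideal.map (Polynomial.C : P →+* Polynomial P) (Ideal.span {s}) := by
    rw [Ideal.map_span, Set.image_singleton]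
  let e : (Polynomial P ⧸ Ideal.span {Polynomial.C s}) ≃+* Polynomial (P ⧸ Ideal.span {s}) :=
    (Ideal.quotEquivOfEq h1).trans
      (Ideal.polynomialQuotientEquivQuotientPolynomial (Ideal.span {s})).symm
  have he : ∀ f : Polynomial P,
      e (Ideal.Quotient.mk (Ideal.span {Polynomial.C s}) f) = f.map q := by
    intro f
    show (Ideal.polynomialQuotientEquivQuotientPolynomial (Ideal.span {s})).symm
      ((Ideal.quotEquivOfEq h1) (Ideal.Quotient.mk (Ideal.span {Polynomial.C s}) f)) = f.map q
    rw [Ideal.quotEquivOfEq_mk, Ideal.polynomialQuotientEquivQuotientPolynomial_symm_mk]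
  have key : Submonoid.map e.toMonoidHom (Algebra.algebraMapSubmonoid (Polynomial P ⧸ Ideal.span {Polynomial.C s}) T)
      = nonZeroDivisors (Polynomial (P ⧸ Ideal.span {s})) := by
    ext x
    rw [mem_nonZeroDivisors_iff_ne_zero]
    simp only [Submonoid.mem_map]
    have hcoe : ⇑e.toMonoidHom = ⇑e := rfl
    simp only [hcoe]
    constructor
    · rintro ⟨a, ⟨f, hf, rfl⟩, rfl⟩
      have : (algebraMap (Polynomial P) (Polynomial P ⧸ Ideal.span {Polynomial.C s})) f
          = Ideal.Quotient.mk (Ideal.span {Polynomial.C s}) f := rfl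
      rw [this, he]
      intro h0
      have hcoeff : ∀ n, f.coeff n ∈ Ideal.span {s} := by
        intro n
        have h2 : (f.map q).coeff n = 0 := by rw [h0]; rfl
        rw [Polynomial.coeff_map] at h2
        exact Ideal.Quotient.eq_zero_iff_mem.mp h2
      have hle : Ideal.span (Set.range f.coeff) ≤ Ideal.span {s} :=
        Ideal.span_le.mpr (by rintro _ ⟨n, rfl⟩; exact hcoeff n)
      rw [(hT f).mp hf] at hle
      exact hmax.ne_top (top_unique hle)
    · intro hx
      obtain ⟨g, rfl⟩ := Polynomial.map_surjective q Ideal.Quotient.mk_surjective x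
      set N := g.natDegree + 1 with hN
      set f := g + Polynomial.C s * Polynomial.X ^ N with hf
      have hqs : q s = 0 := Ideal.Quotient.eq_zero_iff_mem.mpr
        (Ideal.mem_span_singleton_self s)
      have hfN : f.coeff N = s := by
        simp [hf, Polynomial.coeff_eq_zero_of_natDegree_lt (Nat.lt_succ_self _), hN]
      have hfg : f.map q = g.map q := by
        simp [hf, Polynomial.map_add, Polynomial.map_mul, Polynomial.map_pow,
          Polynomial.map_C, hqs]
      have hmem : f ∈ T := by
        rw [hT]
        by_contra hne
        have hle : Ideal.span {s} ≤ Ideal.span (Set.range f.coeff) := by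
          rw [Ideal.span_le, Set.singleton_subset_iff]
          exact hfN ▸ Ideal.subset_span ⟨N, rfl⟩
        have heq := hmax.eq_of_le hne hle
        obtain ⟨j, hj⟩ : ∃ j, (g.map q).coeff j ≠ 0 := by
          by_contra hall
          push_neg at hall
          exact hx (Polynomial.ext hall)
        have hjle : j ≤ g.natDegree := by
          by_contra hlt
          push_neg at hlt
          rw [Polynomial.coeff_map, Polynomial.coeff_eq_zero_of_natDegree_lt hlt,
            map_zero] at hj
          exact hj rfl
        have hfj : f.coeff j = g.coeff j := by
          have hjN : j ≠ N := by omega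
          simp [hf, Polynomial.coeff_X_pow, hjN]
        have hmem' : g.coeff j ∈ Ideal.span {s} := by
          rw [heq, ← hfj]
          exact Ideal.subset_span ⟨j, rfl⟩
        rw [Polynomial.coeff_map] at hj
        exact hj (Ideal.Quotient.eq_zero_iff_mem.mpr hmem')
      refine ⟨Ideal.Quotient.mk (Ideal.span {Polynomial.C s}) f, ⟨f, hmem, rfl⟩, ?_⟩
      rw [he, hfg]
  haveI : IsLocalization (Algebra.algebraMapSubmonoid (Polynomial P ⧸ Ideal.span {Polynomial.C s}) T)
      (TensorProduct (Polynomial P) (Polynomial P ⧸ Ideal.span {Polynomial.C s}) (Localization T)) := by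
    rw [← isLocalizedModule_iff_isLocalization]
    exact (isLocalizedModule_iff_isBaseChange T (Localization T) _).mpr
      (TensorProduct.isPushout' (S := Polynomial P ⧸ Ideal.span {Polynomial.C s}) (T := Localization T)).out
  exact ⟨IsLocalization.ringEquivOfRingEquiv
    (M := Algebra.algebraMapSubmonoid (Polynomial P ⧸ Ideal.span {Polynomial.C s}) T)
    (TensorProduct (Polynomial P) (Polynomial P ⧸ Ideal.span {Polynomial.C s}) (Localization T))
    (RatFunc (P ⧸ Ideal.span {s})) e key⟩
end

section
/- Let R be a Noetherian commutative ring of Krull dimension 1. Then there exists a multiplicative subset S ⊆ R such that the ring S⁻¹R is Artinian and, for every s ∈ S, the ring R/sR is Artinian. Moreover, if Spec R is countable, S can be chosen to be countable. -/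
/-!
Both rings are Noetherian, so by Hopkins–Levitzki it suffices that all their primes are maximal.
Since `dim R = 1`, a prime of `R` that is not minimal is maximal. So it is enough that `S` misses
every minimal prime (then primes of `R/sR` come from non-minimal primes of `R`) and meets every
non-minimal prime (then primes of `S⁻¹R` come from minimal primes of `R`, hence are pairwise
incomparable). By prime avoidance each non-minimal prime `p` contains some `g p` lying in no
minimal prime; the `g p` generate such an `S`, which is countable when `Spec R` is.
-/

universe u

open Ideal

section

variable {R : Type*} [CommRing R]

variable (R) in
def minimalPrimesCompl : Submonoid R where
  carrier := {x | ∀ p ∈ minimalPrimes R, x ∉ p}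
  one_mem' _ hp := hp.1.1.one_notMem
  mul_mem' ha hb p hp hab := (hp.1.1.mem_or_mem hab).elim (ha p hp) (hb p hp)

theorem mem_minimalPrimesCompl {x : R} :
    x ∈ minimalPrimesCompl R ↔ ∀ p ∈ minimalPrimes R, x ∉ p :=
  Iff.rfl

theorem Ideal.exists_mem_minimalPrimesCompl [IsNoetherianRing R] {I : Ideal R}
    (hI : ∀ p ∈ minimalPrimes R, ¬I ≤ p) : ∃ x ∈ I, x ∈ minimalPrimesCompl R := by
  by_contra! h
  have hcover : (I : Set R) ⊆ ⋃ p ∈ minimalPrimes R, (p : Set R) := fun x hx ↦ by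
    simpa [mem_minimalPrimesCompl] using h x hx
  obtain ⟨p, hp, hIp⟩ := (subset_union_prime_finite (minimalPrimes.finite_of_isNoetherianRing R)
    I I (fun p hp _ _ ↦ hp.1.1)).mp hcover
  exact hI p hp hIp

theorem Ideal.IsPrime.exists_mem_minimalPrimesCompl [IsNoetherianRing R] {p : Ideal R}
    (hp : p.IsPrime) (hp_min : p ∉ minimalPrimes R) : ∃ x ∈ p, x ∈ minimalPrimesCompl R :=
  Ideal.exists_mem_minimalPrimesCompl fun _ hq hpq ↦
    hp_min ((hq.2 ⟨hp, bot_le⟩ hpq).antisymm hpq ▸ hq)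

theorem krullDimLE_zero_quotient_span_singleton_of_mem_minimalPrimesCompl [Ring.KrullDimLE 1 R]
    {s : R} (hs : s ∈ minimalPrimesCompl R) : Ring.KrullDimLE 0 (R ⧸ span {s}) :=
  krullDimLE_zero_quotient_iff_forall_minimalPrimes_isMaximal.mpr fun P hP ↦
    ((Ring.krullDimLE_one_iff.mp ‹_› P hP.1.1).resolve_left fun hmin ↦
      hs P hmin (hP.1.2 (mem_span_singleton_self s)))

theorem IsLocalization.krullDimLE_zero_of_forall_disjoint_mem_minimalPrimes (M : Submonoid R)
    (S : Type*) [CommRing S] [Algebra R S] [IsLocalization M S]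
    (hM : ∀ p : Ideal R, p.IsPrime → Disjoint (M : Set R) p → p ∈ minimalPrimes R) :
    Ring.KrullDimLE 0 S := by
  refine .mk₀ fun P hP ↦ ?_
  obtain ⟨m, hm, hPm⟩ := P.exists_le_maximal hP.ne_top
  have hmin (Q : Ideal S) (hQ : Q.IsPrime) : Q.under R ∈ minimalPrimes R :=
    have ⟨hQ', hdisj⟩ := (isPrime_iff_isPrime_disjoint M S Q).mp hQ
    hM _ hQ' hdisj
  have hmP : m.under R ≤ P.under R := (hmin m hm.isPrime).2 (hmin P hP).1 (comap_mono hPm)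
  exact hm.eq_of_le hP.ne_top ((under_le_under_iff M S).mp hmP) ▸ hm

theorem Submonoid.countable_closure {M : Type*} [Monoid M] {s : Set M} (hs : s.Countable) :
    (closure s : Set M).Countable := by
  have := hs.to_subtype
  rw [closure_eq_mrange, MonoidHom.coe_mrange]
  exact Set.countable_range _

end

/-- For a Noetherian commutative ring `R` of Krull dimension `1` there is a multiplicative
subset `S ⊆ R` such that `S⁻¹R` is Artinian and `R/sR` is Artinian for all `s ∈ S`;
moreover if `Spec R` is countable, `S` can be chosen countable. -/
theorem stmt10 (R : Type u) [CommRing R] [IsNoetherianRing R]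
    (hdim : ringKrullDim R = 1) :
    (∃ S : Submonoid R, IsArtinianRing (Localization S) ∧
      ∀ s ∈ S, IsArtinianRing (R ⧸ Ideal.span {s})) ∧
    (Countable (PrimeSpectrum R) →
      ∃ S : Submonoid R, Countable S ∧ IsArtinianRing (Localization S) ∧
        ∀ s ∈ S, IsArtinianRing (R ⧸ Ideal.span {s})) := by
  have : Ring.KrullDimLE 1 R := Ring.krullDimLE_iff.mpr hdim.le
  have hg : ∀ p : {p : PrimeSpectrum R // p.asIdeal ∉ minimalPrimes R},
      ∃ x ∈ p.1.asIdeal, x ∈ minimalPrimesCompl R :=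
    fun p ↦ p.1.isPrime.exists_mem_minimalPrimesCompl p.2
  choose g hg_mem hg_compl using hg
  set S := Submonoid.closure (Set.range g)
  have hS : IsArtinianRing (Localization S) ∧ ∀ s ∈ S, IsArtinianRing (R ⧸ span {s}) := by
    refine ⟨isArtinianRing_iff_krullDimLE_zero.mpr ?_, fun s hs ↦ ?_⟩
    · refine IsLocalization.krullDimLE_zero_of_forall_disjoint_mem_minimalPrimes S _
        fun p hp hdisj ↦ by_contra fun hmin ↦ ?_
      exact Set.disjoint_left.mp hdisj (Submonoid.subset_closure ⟨⟨⟨p, hp⟩, hmin⟩, rfl⟩)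
        (hg_mem ⟨⟨p, hp⟩, hmin⟩)
    · have hs' : s ∈ minimalPrimesCompl R :=
        Submonoid.closure_le.mpr (Set.range_subset_iff.mpr hg_compl) hs
      exact isArtinianRing_iff_krullDimLE_zero.mpr
        (krullDimLE_zero_quotient_span_singleton_of_mem_minimalPrimesCompl hs')
  exact ⟨⟨S, hS⟩, fun _ ↦
    ⟨S, (Submonoid.countable_closure (Set.countable_range g)).to_subtype, hS⟩⟩
end

section
/- Let R be a Noetherian commutative ring, S ⊆ R a multiplicative subset, K ⊆ L finitely generated R-modules, and F any R-module. Then the natural map lim_{s ∈ S} (K/sK ⊗_R F) → lim_{s ∈ S} (K/(K ∩ sL) ⊗_R F) between projective limits over the divisibility preorder on S is an isomorphism. -/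
universe u

/-- (Artin–Rees for `S`-limits.) Let `R` be Noetherian, `S ⊆ R` a multiplicative subset,
`K ⊆ L` finitely generated `R`-modules and `F` any `R`-module. The natural map
`lim_{s ∈ S} (K/sK ⊗ F) → lim_{s ∈ S} (K/(K ∩ sL) ⊗ F)` between the projective limits
(over the divisibility preorder on `S`, realized as sets of compatible families)
is an isomorphism, i.e. the componentwise natural map restricts to a bijection
between the two limits. -/
theorem stmt11 (R : Type u) [CommRing R] [IsNoetherianRing R] (S : Submonoid R)
    (L : Type u) [AddCommGroup L] [Module R L] [Module.Finite R L]
    (K : Submodule R L) (hK : K.FG)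
    (F : Type u) [AddCommGroup F] [Module R F] :
    -- the submodules `sK ⊆ K` and `K ∩ sL ⊆ K`
    let p : S → Submodule R K := fun s => Ideal.span {(s : R)} • ⊤
    let q : S → Submodule R K := fun s =>
      Submodule.comap K.subtype (Ideal.span {(s : R)} • (⊤ : Submodule R L))
    -- the transition maps of the two towers, tensored with `F`
    let α : ∀ (s t : S), (s : R) ∣ (t : R) →
        ((TensorProduct R (K ⧸ p t) F) →ₗ[R] (TensorProduct R (K ⧸ p s) F)) := fun s t h =>
      LinearMap.rTensor F (Submodule.mapQ (p t) (p s) (LinearMap.id : K →ₗ[R] K)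
        (by
          rw [Submodule.comap_id]
          exact Submodule.smul_mono_left (Ideal.span_singleton_le_span_singleton.mpr h)))
    let β : ∀ (s t : S), (s : R) ∣ (t : R) →
        ((TensorProduct R (K ⧸ q t) F) →ₗ[R] (TensorProduct R (K ⧸ q s) F)) := fun s t h =>
      LinearMap.rTensor F (Submodule.mapQ (q t) (q s) (LinearMap.id : K →ₗ[R] K)
        (by
          rw [Submodule.comap_id]
          exact Submodule.comap_mono
            (Submodule.smul_mono_left (Ideal.span_singleton_le_span_singleton.mpr h))))
    -- the componentwise natural map `K/sK ⊗ F → K/(K ∩ sL) ⊗ F`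
    let ψ : ∀ s : S, (TensorProduct R (K ⧸ p s) F) →ₗ[R] (TensorProduct R (K ⧸ q s) F) :=
      fun s =>
      LinearMap.rTensor F (Submodule.mapQ (p s) (q s) (LinearMap.id : K →ₗ[R] K)
        (by
          rw [Submodule.comap_id, ← Submodule.map_le_iff_le_comap, Submodule.map_smul'']
          exact Submodule.smul_mono le_rfl le_top))
    -- the two projective limits, as sets of compatible families
    let lim₁ : Set (∀ s : S, TensorProduct R (K ⧸ p s) F) :=
      {x | ∀ (s t : S) (h : (s : R) ∣ (t : R)), α s t h (x t) = x s}
    let lim₂ : Set (∀ s : S, TensorProduct R (K ⧸ q s) F) :=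
      {x | ∀ (s t : S) (h : (s : R) ∣ (t : R)), β s t h (x t) = x s}
    Set.BijOn (fun x (s : S) => ψ s (x s)) lim₁ lim₂ := by
  intro p q α β ψ lim₁ lim₂
  -- composing two `rTensor (mapQ id)` maps gives an `rTensor (mapQ id)` map
  have comp_app : ∀ (A B C : Submodule R K) (h1 : A ≤ B) (h2 : B ≤ C) (h3 : A ≤ C)
      (z : TensorProduct R (K ⧸ A) F),
      LinearMap.rTensor F (Submodule.mapQ B C LinearMap.id h2)
        (LinearMap.rTensor F (Submodule.mapQ A B LinearMap.id h1) z) =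
      LinearMap.rTensor F (Submodule.mapQ A C LinearMap.id h3) z := by
    intro A B C h1 h2 h3 z
    have hcomp : (Submodule.mapQ B C LinearMap.id h2).comp
        (Submodule.mapQ A B LinearMap.id h1) = Submodule.mapQ A C LinearMap.id h3 := by
      apply Submodule.linearMap_qext
      ext x
      simp [Submodule.mapQ_apply]
    rw [← hcomp, LinearMap.rTensor_comp, LinearMap.comp_apply]
  -- basic monotonicity facts
  have hpmono : ∀ {s t : S}, (s : R) ∣ (t : R) → p t ≤ p s := fun h =>
    Submodule.smul_mono_left (Ideal.span_singleton_le_span_singleton.mpr h)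
  have hqmono : ∀ {s t : S}, (s : R) ∣ (t : R) → q t ≤ q s := fun h =>
    Submodule.comap_mono (Submodule.smul_mono_left (Ideal.span_singleton_le_span_singleton.mpr h))
  have hpq : ∀ s : S, p s ≤ q s := fun s => by
    show Ideal.span {(s : R)} • ⊤ ≤ Submodule.comap K.subtype _
    rw [← Submodule.map_le_iff_le_comap, Submodule.map_smul'']
    exact Submodule.smul_mono le_rfl le_top
  -- the Artin–Rees step: for each `s` there is `t ∈ S` with `s ∣ t` and `K ∩ tL ⊆ sK`
  have key : ∀ s : S, ∃ t : S, (s : R) ∣ (t : R) ∧ q t ≤ p s := by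
    intro s
    set I : Ideal R := Ideal.span {(s : R)} with hI
    obtain ⟨k, hk⟩ := Ideal.exists_pow_inf_eq_pow_smul I K
    refine ⟨⟨(s : R) ^ (k + 1), pow_mem s.2 (k + 1)⟩, ⟨(s : R) ^ k, by ring⟩, ?_⟩
    have h1 : I ^ (k + 1) • ⊤ ⊓ K = I • (I ^ k • ⊤ ⊓ K) := by
      simpa using hk (k + 1) (by omega)
    have hspan : Ideal.span {((s : R) ^ (k + 1))} = I ^ (k + 1) := by
      rw [hI, Ideal.span_singleton_pow]
    have h2 : Submodule.comap K.subtype (I • (K : Submodule R L)) =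
        I • (⊤ : Submodule R K) := by
      have : I • (K : Submodule R L) = Submodule.map K.subtype (I • ⊤) := by
        rw [Submodule.map_smul'', Submodule.map_subtype_top]
      rw [this, Submodule.comap_map_eq, Submodule.ker_subtype, sup_bot_eq]
    show Submodule.comap K.subtype (Ideal.span {((s : R) ^ (k + 1))} • ⊤) ≤ p s
    calc Submodule.comap K.subtype (Ideal.span {((s : R) ^ (k + 1))} • ⊤)
        = Submodule.comap K.subtype (I ^ (k + 1) • ⊤ ⊓ K) := by
          rw [hspan, Submodule.comap_inf]
          have : Submodule.comap K.subtype (K : Submodule R L) = ⊤ := by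
            ext x; simp [x.2]
          rw [this, inf_top_eq]
      _ = Submodule.comap K.subtype (I • (I ^ k • ⊤ ⊓ K)) := by rw [h1]
      _ ≤ Submodule.comap K.subtype (I • (K : Submodule R L)) :=
          Submodule.comap_mono (Submodule.smul_mono le_rfl inf_le_right)
      _ = I • ⊤ := h2
  -- the "inverse" comparison maps coming from Artin–Rees
  let γ : ∀ (s t : S), q t ≤ p s →
      (TensorProduct R (K ⧸ q t) F →ₗ[R] TensorProduct R (K ⧸ p s) F) := fun s t h =>
    LinearMap.rTensor F (Submodule.mapQ (q t) (p s) LinearMap.id h)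
  choose t hdvd hle using key
  refine ⟨?_, ?_, ?_⟩
  · -- MapsTo
    intro x hx s s' h
    have h1 : β s s' h (ψ s' (x s')) =
        LinearMap.rTensor F (Submodule.mapQ (p s') (q s) LinearMap.id
          ((hpq s').trans (hqmono h))) (x s') :=
      comp_app (p s') (q s') (q s) (hpq s') (hqmono h) ((hpq s').trans (hqmono h)) (x s')
    have h2 : ψ s (α s s' h (x s')) =
        LinearMap.rTensor F (Submodule.mapQ (p s') (q s) LinearMap.id
          ((hpq s').trans (hqmono h))) (x s') :=
      comp_app (p s') (p s) (q s) (hpmono h) (hpq s) ((hpq s').trans (hqmono h)) (x s')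
    show β s s' h (ψ s' (x s')) = ψ s (x s)
    rw [h1, ← h2, hx s s' h]
  · -- InjOn
    intro x hx x' hx' hEq
    funext s
    have hψ : ψ (t s) (x (t s)) = ψ (t s) (x' (t s)) := congrFun hEq (t s)
    have e : ∀ z : TensorProduct R (K ⧸ p (t s)) F,
        α s (t s) (hdvd s) z = γ s (t s) (hle s) (ψ (t s) z) := fun z =>
      (comp_app (p (t s)) (q (t s)) (p s) (hpq (t s)) (hle s)
        ((hpq (t s)).trans (hle s)) z).symm
    calc x s = α s (t s) (hdvd s) (x (t s)) := (hx s (t s) (hdvd s)).symm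
      _ = γ s (t s) (hle s) (ψ (t s) (x (t s))) := e _
      _ = γ s (t s) (hle s) (ψ (t s) (x' (t s))) := by rw [hψ]
      _ = α s (t s) (hdvd s) (x' (t s)) := (e _).symm
      _ = x' s := hx' s (t s) (hdvd s)
  · -- SurjOn
    intro y hy
    refine ⟨fun s => γ s (t s) (hle s) (y (t s)), ?_, ?_⟩
    · -- the preimage family is compatible
      intro s s' h
      set u : S := t s * t s' with hu
      have hd1 : ((t s : R)) ∣ (u : R) := ⟨(t s' : R), rfl⟩
      have hd2 : ((t s' : R)) ∣ (u : R) := ⟨(t s : R), mul_comm _ _⟩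
      have hqu : q u ≤ p s := (hqmono hd2).trans ((hle s').trans (hpmono h))
      have e1 : α s s' h (γ s' (t s') (hle s') (y (t s'))) =
          LinearMap.rTensor F (Submodule.mapQ (q (t s')) (p s) LinearMap.id
            ((hle s').trans (hpmono h))) (y (t s')) :=
        comp_app (q (t s')) (p s') (p s) (hle s') (hpmono h)
          ((hle s').trans (hpmono h)) (y (t s'))
      have e2 : LinearMap.rTensor F (Submodule.mapQ (q (t s')) (p s) LinearMap.id
            ((hle s').trans (hpmono h))) (β (t s') u hd2 (y u)) =
          LinearMap.rTensor F (Submodule.mapQ (q u) (p s) LinearMap.id hqu) (y u) :=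
        comp_app (q u) (q (t s')) (p s) (hqmono hd2) ((hle s').trans (hpmono h)) hqu (y u)
      have e3 : γ s (t s) (hle s) (β (t s) u hd1 (y u)) =
          LinearMap.rTensor F (Submodule.mapQ (q u) (p s) LinearMap.id hqu) (y u) :=
        comp_app (q u) (q (t s)) (p s) (hqmono hd1) (hle s) hqu (y u)
      show α s s' h (γ s' (t s') (hle s') (y (t s'))) = γ s (t s) (hle s) (y (t s))
      rw [e1, ← hy (t s') u hd2, e2, ← e3, hy (t s) u hd1]
    · -- it indeed maps to `y`
      funext s
      have e : ψ s (γ s (t s) (hle s) (y (t s))) = β s (t s) (hdvd s) (y (t s)) :=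
        comp_app (q (t s)) (p s) (q s) (hle s) (hpq s) ((hle s).trans (hpq s)) (y (t s))
      show ψ s (γ s (t s) (hle s) (y (t s))) = y s
      rw [e, hy s (t s) (hdvd s)]
end

section
/- Let R be a Noetherian commutative ring, S ⊆ R a countable multiplicative subset, and F an R-module such that F/sF is a flat R/sR-module for every s ∈ S. Then the S-completion Λ(F) = lim_{s ∈ S} F/sF is a flat R-module. -/
/-!
Choose a chain `T₀ ∣ T₁ ∣ ⋯` in `S` that is cofinal for divisibility (this is where countability
enters); the completion is the limit of the `F/TₙF`, separated and complete for the filtration by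
the kernels of the projections to `F/TₙF`. By the equational criterion it suffices that the
completion preserves exactness of sequences `Rᵒ → Rⁿ → Rᵐ` of matrices. A solution of the
relations modulo a deep level `T_M` factors, by flatness of `F/T_M F`, through syzygies modulo
`T_M`, and Artin–Rees turns these into genuine syzygies up to a multiple of `T_N`. Thus every
solution is approximated at every level by an image of the syzygy matrix; applying the same
approximation to the syzygies of the syzygy matrix, the approximations can be corrected into a
Cauchy sequence, whose limit is an exact preimage.
-/

open Function Matrix
open scoped Pointwise

namespace Matrix

variable {R : Type*} [CommRing R] {M N : Type*} [AddCommGroup M] [Module R M]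
  [AddCommGroup N] [Module R N] {m n o : Type*}

-- `A ⊗ M`, under the identification `Rⁿ ⊗ M ≃ Mⁿ`.
def smulVec [Fintype n] (A : Matrix m n R) : (n → M) →ₗ[R] (m → M) :=
  LinearMap.pi fun i => ∑ j, A i j • LinearMap.proj j

variable [Fintype n]

@[simp]
lemma smulVec_apply (A : Matrix m n R) (x : n → M) (i : m) :
    A.smulVec x i = ∑ j, A i j • x j := by
  simp [smulVec]

lemma smulVec_smulVec [Fintype o] (A : Matrix m n R) (B : Matrix n o R) (x : o → M) :
    A.smulVec (B.smulVec x) = (A * B).smulVec x := by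
  ext i
  simp only [smulVec_apply, mul_apply, Finset.smul_sum, Finset.sum_smul, mul_smul]
  exact Finset.sum_comm

@[simp]
lemma zero_smulVec (x : n → M) : (0 : Matrix m n R).smulVec x = 0 := by
  ext i
  simp

lemma add_smulVec (A B : Matrix m n R) (x : n → M) :
    (A + B).smulVec x = A.smulVec x + B.smulVec x := by
  ext i
  simp [add_smul, Finset.sum_add_distrib]

lemma smulVec_smul (A : Matrix m n R) (r : R) (x : n → M) :
    (r • A).smulVec x = r • A.smulVec x := by
  ext i
  simp [Finset.smul_sum, mul_smul]

lemma comp_smulVec (φ : M →ₗ[R] N) (A : Matrix m n R) (x : n → M) :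
    φ ∘ A.smulVec x = A.smulVec (φ ∘ x) := by
  ext i
  simp

lemma smulVec_mem_pi {p : Submodule R M} (A : Matrix m n R) {x : n → M}
    (hx : x ∈ Submodule.pi Set.univ fun _ ↦ p) :
    A.smulVec x ∈ Submodule.pi Set.univ fun _ ↦ p := by
  simp only [Submodule.mem_pi, Set.mem_univ, forall_const, smulVec_apply] at hx ⊢
  exact fun i ↦ Submodule.sum_mem _ fun j _ ↦ p.smul_mem _ (hx j)

lemma smulVec_map_algebraMap {A : Type*} [CommRing A] [Algebra R A] [Module A M]
    [IsScalarTower R A M] (B : Matrix m n R) (x : n → M) :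
    (B.map (algebraMap R A)).smulVec x = B.smulVec x := by
  ext i
  simp [algebraMap_smul]

lemma mul_eq_zero_of_exact [Fintype o] {σ : Matrix n o R} {C : Matrix m n R}
    (h : Exact σ.mulVecLin C.mulVecLin) : C * σ = 0 := by
  classical
  ext i j
  have hcol : (C * σ) *ᵥ Pi.single j 1 = 0 := by
    rw [← mulVec_mulVec]
    exact (h _).2 ⟨_, rfl⟩
  simpa [mulVec_single_one] using congrFun hcol i

lemma exists_exact_mulVecLin [IsNoetherianRing R] (C : Matrix m n R) :
    ∃ (k : ℕ) (σ : Matrix n (Fin k) R), Exact σ.mulVecLin C.mulVecLin := by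
  obtain ⟨k, s, hs⟩ := Submodule.fg_iff_exists_fin_generating_family.mp
    (IsNoetherian.noetherian (LinearMap.ker C.mulVecLin))
  refine ⟨k, of fun i j ↦ s j i, LinearMap.exact_iff.mpr ?_⟩
  rw [range_mulVecLin, ← hs]
  rfl

theorem exists_eq_mulVec_add_smul_of_pow_dvd [IsNoetherianRing R] [Finite m] [Fintype o]
    {σ : Matrix n o R} {C : Matrix m n R} (h : Exact σ.mulVecLin C.mulVecLin) (t : R) :
    ∃ c, ∀ τ : n → R, (∀ i, t ^ c ∣ (C *ᵥ τ) i) → ∃ g ξ, τ = σ *ᵥ g + t • ξ := by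
  obtain ⟨k, hk⟩ :=
    Ideal.exists_pow_inf_eq_pow_smul (Ideal.span {t}) (LinearMap.range C.mulVecLin)
  refine ⟨k + 1, fun τ hτ ↦ ?_⟩
  have hpow : C *ᵥ τ ∈ Ideal.span {t} ^ (k + 1) • ⊤ ⊓ LinearMap.range C.mulVecLin := by
    refine ⟨?_, τ, rfl⟩
    choose w hw using hτ
    rw [show C *ᵥ τ = t ^ (k + 1) • w from funext hw]
    exact Submodule.smul_mem_smul (Ideal.pow_mem_pow (Ideal.mem_span_singleton_self t) _) trivial
  rw [hk (k + 1) k.le_succ, Nat.add_sub_cancel_left, pow_one] at hpow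
  have hmem : C *ᵥ τ ∈ t • LinearMap.range C.mulVecLin := by
    rw [← Submodule.ideal_span_singleton_smul]
    exact Submodule.smul_mono le_rfl inf_le_right hpow
  obtain ⟨_, ⟨ξ, rfl⟩, hξ⟩ := (Submodule.mem_smul_pointwise_iff_exists _ _ _).mp hmem
  obtain ⟨g, hg⟩ := (h (τ - t • ξ)).1 (by
    rw [mulVecLin_apply] at hξ ⊢
    rw [mulVec_sub, mulVec_smul, hξ, sub_self])
  exact ⟨g, ξ, by rw [← mulVecLin_apply, hg, sub_add_cancel]⟩

theorem exists_eq_mul_add_smul_of_pow_dvd [IsNoetherianRing R] [Finite m] [Fintype o]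
    {σ : Matrix n o R} {C : Matrix m n R} (h : Exact σ.mulVecLin C.mulVecLin) (t : R) :
    ∃ c, ∀ {p : Type*} (B : Matrix n p R), (∀ i j, t ^ c ∣ (C * B) i j) →
      ∃ (G : Matrix o p R) (Ξ : Matrix n p R), B = σ * G + t • Ξ := by
  obtain ⟨c, hc⟩ := exists_eq_mulVec_add_smul_of_pow_dvd h t
  refine ⟨c, fun B hB ↦ ?_⟩
  choose g ξ hgξ using fun j ↦ hc (B.col j) fun i ↦ by
    simpa [mulVec, dotProduct, mul_apply] using hB i j
  refine ⟨of fun l j ↦ g j l, of fun i j ↦ ξ j i, ?_⟩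
  ext i j
  simpa [mul_apply, mulVec, dotProduct] using congrFun (hgξ j) i

end Matrix

theorem Module.Flat.exists_smulVec_eq_of_smulVec_eq_zero {R M : Type*} [CommRing R]
    [AddCommGroup M] [Module R M] [Module.Flat R M] {m n : Type*} [Fintype m] [Fintype n]
    {C : Matrix m n R} {v : n → M} (h : C.smulVec v = 0) :
    ∃ (k : ℕ) (B : Matrix n (Fin k) R) (y : Fin k → M), v = B.smulVec y ∧ C * B = 0 := by
  classical
  obtain ⟨k, a, y, hxy, hay⟩ := exists_factorization_of_comp_eq_zero_of_free
    (f := Cᵀ.mulVecLin) (x := Fintype.linearCombination R v) (by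
      ext l
      simpa [Matrix.mulVec_single_one, Fintype.linearCombination_apply] using congrFun h l)
  let a' := (Finsupp.linearEquivFunOnFinite R R (Fin k)).toLinearMap ∘ₗ a
  refine ⟨k, (LinearMap.toMatrix' a')ᵀ, fun j ↦ y (Finsupp.single j 1), ?_, ?_⟩
  · ext i
    have hy : ∀ g, y g = ∑ j, g j • y (Finsupp.single j 1) := fun g ↦ by
      conv_lhs => rw [← Finsupp.univ_sum_single g]
      rw [map_sum]
      exact Finset.sum_congr rfl fun j _ ↦ by rw [← map_smul, Finsupp.smul_single_one]
    calc v i = Fintype.linearCombination R v (Pi.single i 1) := by simp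
      _ = _ := by
        rw [hxy, LinearMap.comp_apply, hy]
        simp [a', LinearMap.toMatrix'_apply]
  · have : LinearMap.toMatrix' a' * Cᵀ = 0 := by
      rw [← LinearMap.toMatrix'_toLin' Cᵀ, ← LinearMap.toMatrix'_comp, Matrix.toLin'_apply',
        LinearMap.comp_assoc, hay]
      simp
    simpa [Matrix.transpose_mul] using congrArg Matrix.transpose this

section SuccessiveApproximation

variable {R M N : Type*} [CommRing R] [AddCommGroup M] [Module R M] [AddCommGroup N] [Module R N]

theorem exists_limit_pi {ι : Type*} {L : ℕ → Submodule R M}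
    (hL : ∀ x : ℕ → M, (∀ n, x (n + 1) - x n ∈ L n) → ∃ X, ∀ n, X - x n ∈ L n)
    (x : ℕ → ι → M) (hx : ∀ n, x (n + 1) - x n ∈ Submodule.pi Set.univ fun _ ↦ L n) :
    ∃ X, ∀ n, X - x n ∈ Submodule.pi Set.univ fun _ ↦ L n := by
  simp only [Submodule.mem_pi, Set.mem_univ, forall_const, Pi.sub_apply] at hx ⊢
  choose X hX using fun i ↦ hL (fun n ↦ x n i) fun n ↦ hx n i
  exact ⟨X, fun n i ↦ hX i n⟩

theorem exists_apply_eq_of_approx {L : ℕ → Submodule R M} {L' : ℕ → Submodule R N}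
    (hL' : Antitone L') (hsep : ∀ y, (∀ n, y ∈ L' n) → y = 0)
    (hL : ∀ x : ℕ → M, (∀ n, x (n + 1) - x n ∈ L n) → ∃ X, ∀ n, X - x n ∈ L n)
    {φ : M →ₗ[R] N} (hφ : ∀ n, L n ≤ (L' n).comap φ) {μ : ℕ → ℕ} (hμ : ∀ n, n ≤ μ n)
    {y : N} {w₀ : M} (hw₀ : y - φ w₀ ∈ L' (μ 0))
    (hstep : ∀ n w, y - φ w ∈ L' (μ n) → ∃ w', y - φ w' ∈ L' (μ (n + 1)) ∧ w' - w ∈ L n) :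
    ∃ X, φ X = y := by
  choose next hnext using hstep
  let w : ∀ n, {w // y - φ w ∈ L' (μ n)} := fun n ↦
    Nat.rec ⟨w₀, hw₀⟩ (fun n w ↦ ⟨next n w.1 w.2, (hnext n w.1 w.2).1⟩) n
  obtain ⟨X, hX⟩ := hL (fun n ↦ (w n).1) fun n ↦ (hnext n _ _).2
  refine ⟨X, (sub_eq_zero.mp (hsep _ fun n ↦ ?_)).symm⟩
  rw [show y - φ X = (y - φ (w n).1) - φ (X - (w n).1) by rw [map_sub]; abel]
  exact sub_mem (hL' (hμ n) (w n).2) (hφ n (hX n))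

end SuccessiveApproximation

variable {R : Type*} [CommRing R] {F : Type*} [AddCommGroup F] [Module R F]

abbrev QuotBy (F : Type*) [AddCommGroup F] [Module R F] (s : R) : Type _ :=
  F ⧸ (Ideal.span {s} • ⊤ : Submodule R F)

namespace QuotBy

def transition (F : Type*) [AddCommGroup F] [Module R F] {s t : R} (h : s ∣ t) :
    QuotBy F t →ₗ[R] QuotBy F s :=
  Submodule.mapQ (Ideal.span {t} • ⊤) (Ideal.span {s} • ⊤) (LinearMap.id : F →ₗ[R] F)
    (by
      rw [Submodule.comap_id]
      exact Submodule.smul_mono_left (Ideal.span_singleton_le_span_singleton.mpr h))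

@[simp]
lemma transition_mk {s t : R} (h : s ∣ t) (f : F) :
    transition F h (Submodule.Quotient.mk f) = Submodule.Quotient.mk f := by
  simp [transition]

lemma transition_transition {s t u : R} (hst : s ∣ t) (htu : t ∣ u) (x : QuotBy F u) :
    transition F hst (transition F htu x) = transition F (hst.trans htu) x := by
  obtain ⟨f, rfl⟩ := Submodule.Quotient.mk_surjective _ x
  simp

@[simp]
lemma transition_self {s : R} (h : s ∣ s) (x : QuotBy F s) : transition F h x = x := by
  obtain ⟨f, rfl⟩ := Submodule.Quotient.mk_surjective _ x
  simp

lemma smul_eq_zero (s : R) (x : QuotBy F s) : s • x = 0 := by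
  obtain ⟨f, rfl⟩ := Submodule.Quotient.mk_surjective _ x
  rw [← Submodule.Quotient.mk_smul, Submodule.Quotient.mk_eq_zero]
  exact Submodule.smul_mem_smul (Ideal.mem_span_singleton_self s) trivial

end QuotBy

open QuotBy

def Submonoid.completion (S : Submonoid R) (F : Type*) [AddCommGroup F] [Module R F] :
    Submodule R (∀ s : S, QuotBy F (s : R)) :=
  ⨅ (s : S) (t : S) (h : (s : R) ∣ t),
    LinearMap.ker ((transition F h).comp
      (LinearMap.proj t : (∀ u : S, QuotBy F (u : R)) →ₗ[R] _) - LinearMap.proj s)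

namespace Submonoid.completion

variable {S : Submonoid R}

lemma mem_iff {x : ∀ s : S, QuotBy F (s : R)} :
    x ∈ S.completion F ↔ ∀ (s t : S) (h : (s : R) ∣ t), transition F h (x t) = x s := by
  simp only [Submonoid.completion, Submodule.mem_iInf, LinearMap.mem_ker, LinearMap.sub_apply,
    LinearMap.comp_apply, LinearMap.proj_apply, sub_eq_zero]

def eval (s : S) : S.completion F →ₗ[R] QuotBy F (s : R) :=
  (LinearMap.proj s).comp (S.completion F).subtype

lemma transition_eval {s t : S} (h : (s : R) ∣ t) (x : S.completion F) :
    transition F h (eval t x) = eval s x :=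
  mem_iff.mp x.2 s t h

lemma eval_surjective (s : S) : Surjective (eval s : S.completion F →ₗ[R] _) := by
  intro w
  obtain ⟨f, rfl⟩ := Submodule.Quotient.mk_surjective _ w
  exact ⟨⟨fun _ ↦ Submodule.Quotient.mk f, mem_iff.mpr fun _ _ _ ↦ transition_mk _ _⟩, rfl⟩

theorem exists_eval_smulVec_eq {m n : Type*} [Fintype m] [Fintype n] (s : S)
    [Module.Flat (R ⧸ Ideal.span {(s : R)}) (QuotBy F (s : R))] {C : Matrix m n R}
    {v : n → S.completion F} (hv : ∀ i, eval s (C.smulVec v i) = 0) :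
    ∃ (k : ℕ) (B : Matrix n (Fin k) R) (Y : Fin k → S.completion F),
      (∀ i j, (s : R) ∣ (C * B) i j) ∧ ∀ j, eval s (v j) = eval s (B.smulVec Y j) := by
  let I := Ideal.span {(s : R)}
  have hrel : (C.map (algebraMap R (R ⧸ I))).smulVec (eval s ∘ v) = 0 := by
    rw [Matrix.smulVec_map_algebraMap, ← Matrix.comp_smulVec]
    exact funext hv
  obtain ⟨k, B', y, hvy, hCB⟩ := Module.Flat.exists_smulVec_eq_of_smulVec_eq_zero hrel
  choose B hB using fun i j ↦ Ideal.Quotient.mk_surjective (B' i j)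
  have hB' : B' = (Matrix.of B).map (algebraMap R (R ⧸ I)) := by
    ext i j
    exact (hB i j).symm
  choose Y hY using fun j ↦ eval_surjective s (y j)
  refine ⟨k, Matrix.of B, Y, fun i j ↦ ?_, fun j ↦ ?_⟩
  · rw [hB', ← Matrix.map_mul] at hCB
    have hij := congrFun (congrFun hCB i) j
    rwa [Matrix.map_apply, Matrix.zero_apply, Ideal.Quotient.algebraMap_eq,
      Ideal.Quotient.eq_zero_iff_mem, Ideal.mem_span_singleton] at hij
  · rw [hB', Matrix.smulVec_map_algebraMap] at hvy
    have hY' : eval s ∘ Y = y := funext hY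
    exact (congrFun hvy j).trans (by rw [← hY', ← Matrix.comp_smulVec]; rfl)

section Chain

variable {T : ℕ → S} (hT : ∀ n, (T n : R) ∣ T (n + 1)) (hcof : ∀ s : S, ∃ n, (s : R) ∣ T n)

include hT in
lemma dvd_of_le {m n : ℕ} (h : m ≤ n) : (T m : R) ∣ T n := by
  induction n, h using Nat.le_induction with
  | base => rfl
  | succ n _ ih => exact ih.trans (hT n)

include hT in
lemma transition_eq_of_compatible {c : ∀ n, QuotBy F (T n : R)}
    (hc : ∀ n, transition F (hT n) (c (n + 1)) = c n) {m n : ℕ} (h : m ≤ n) :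
    transition F (dvd_of_le hT h) (c n) = c m := by
  induction n, h using Nat.le_induction with
  | base => exact transition_self _ _
  | succ n hmn ih => rw [← ih, ← hc n, transition_transition]

include hT hcof in
theorem exists_eval_eq_of_compatible (c : ∀ n, QuotBy F (T n : R))
    (hc : ∀ n, transition F (hT n) (c (n + 1)) = c n) :
    ∃ x : S.completion F, ∀ n, eval (T n) x = c n := by
  have key : ∀ (s : S) {n₁ n₂} (h₁ : (s : R) ∣ T n₁) (h₂ : (s : R) ∣ T n₂),
      transition F h₁ (c n₁) = transition F h₂ (c n₂) := by
    suffices ∀ (s : S) {n₁ n₂} (h₁ : (s : R) ∣ T n₁) (h₂ : (s : R) ∣ T n₂), n₁ ≤ n₂ →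
        transition F h₁ (c n₁) = transition F h₂ (c n₂) by
      intro s n₁ n₂ h₁ h₂
      rcases le_total n₁ n₂ with h | h
      exacts [this s h₁ h₂ h, (this s h₂ h₁ h).symm]
    intro s n₁ n₂ h₁ h₂ h
    rw [← transition_eq_of_compatible hT hc h, transition_transition]
  choose N hN using hcof
  refine ⟨⟨fun s ↦ transition F (hN s) (c (N s)), mem_iff.mpr fun s t h ↦ ?_⟩, fun n ↦ ?_⟩
  · rw [transition_transition]
    exact key _ _ _
  · exact (key (T n) (hN (T n)) dvd_rfl).trans (transition_self _ _)

def filtration (T : ℕ → S) (n : ℕ) : Submodule R (S.completion F) :=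
  LinearMap.ker (eval (T n))

include hT in
lemma filtration_antitone : Antitone (filtration (F := F) T) := fun m n h x hx ↦ by
  rw [filtration, LinearMap.mem_ker] at hx ⊢
  rw [← transition_eval (dvd_of_le hT h), hx, map_zero]

lemma smul_mem_filtration (n : ℕ) (x : S.completion F) : (T n : R) • x ∈ filtration T n := by
  rw [filtration, LinearMap.mem_ker, map_smul]
  exact smul_eq_zero _ _

include hcof in
lemma eq_zero_of_forall_mem_filtration {x : S.completion F} (hx : ∀ n, x ∈ filtration T n) :
    x = 0 := by
  refine Subtype.ext (funext fun s ↦ ?_)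
  obtain ⟨n, hn⟩ := hcof s
  change eval s x = 0
  rw [← transition_eval hn]
  exact (congrArg _ (hx n)).trans (map_zero _)

include hT hcof in
theorem exists_limit (x : ℕ → S.completion F) (hx : ∀ n, x (n + 1) - x n ∈ filtration T n) :
    ∃ X, ∀ n, X - x n ∈ filtration T n := by
  obtain ⟨X, hX⟩ := exists_eval_eq_of_compatible hT hcof (fun n ↦ eval (T n) (x n)) fun n ↦ by
    have := hx n
    rw [filtration, LinearMap.mem_ker, map_sub, sub_eq_zero] at this
    rw [transition_eval, this]
  exact ⟨X, fun n ↦ by rw [filtration, LinearMap.mem_ker, map_sub, hX, sub_self]⟩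

variable {m n o : Type*} [Fintype m] [Fintype n] [Fintype o]

include hT hcof in
theorem exists_sub_smulVec_mem_filtration [IsNoetherianRing R]
    (hflat : ∀ s : S, Module.Flat (R ⧸ Ideal.span {(s : R)}) (QuotBy F (s : R)))
    {σ : Matrix n o R} {C : Matrix m n R} (hex : Exact σ.mulVecLin C.mulVecLin) (N : ℕ) :
    ∃ M ≥ N, ∀ v : n → S.completion F,
      C.smulVec v ∈ Submodule.pi Set.univ (fun _ ↦ filtration T M) →
      ∃ z, v - σ.smulVec z ∈ Submodule.pi Set.univ fun _ ↦ filtration T N := by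
  obtain ⟨c, hc⟩ := Matrix.exists_eq_mul_add_smul_of_pow_dvd hex (T N : R)
  obtain ⟨M₀, hM₀⟩ := hcof (T N ^ c)
  refine ⟨max N M₀, le_max_left _ _, fun v hv ↦ ?_⟩
  have := hflat (T (max N M₀))
  simp only [Submodule.mem_pi, Set.mem_univ, forall_const] at hv ⊢
  obtain ⟨k, B, Y, hCB, hvB⟩ := exists_eval_smulVec_eq (T (max N M₀)) hv
  obtain ⟨G, Ξ, rfl⟩ := hc B fun i j ↦
    (by simpa using hM₀ : (T N : R) ^ c ∣ T M₀).trans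
      ((dvd_of_le hT (le_max_right _ _)).trans (hCB i j))
  refine ⟨G.smulVec Y, fun j ↦ ?_⟩
  have hsplit : v j - σ.smulVec (G.smulVec Y) j =
      (v j - (σ * G + (T N : R) • Ξ).smulVec Y j) + (T N : R) • Ξ.smulVec Y j := by
    rw [Matrix.add_smulVec, Matrix.smulVec_smul, Matrix.smulVec_smulVec]
    simp only [Pi.add_apply, Pi.smul_apply]
    abel
  rw [Pi.sub_apply, hsplit]
  refine add_mem (filtration_antitone hT (le_max_left N M₀) ?_) (smul_mem_filtration _ _)
  rw [filtration, LinearMap.mem_ker, map_sub, hvB, sub_self]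

include hT hcof in
theorem exact_smulVec [IsNoetherianRing R]
    (hflat : ∀ s : S, Module.Flat (R ⧸ Ideal.span {(s : R)}) (QuotBy F (s : R)))
    {σ : Matrix n o R} {C : Matrix m n R} (hex : Exact σ.mulVecLin C.mulVecLin) :
    Exact (σ.smulVec : (o → S.completion F) →ₗ[R] _) C.smulVec := by
  intro x
  refine ⟨fun hx ↦ ?_, ?_⟩
  swap
  · rintro ⟨X, rfl⟩
    rw [Matrix.smulVec_smulVec, Matrix.mul_eq_zero_of_exact hex, Matrix.zero_smulVec]
  let L : ℕ → Submodule R (o → S.completion F) :=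
    fun N ↦ Submodule.pi Set.univ fun _ ↦ filtration T N
  let L' : ℕ → Submodule R (n → S.completion F) :=
    fun N ↦ Submodule.pi Set.univ fun _ ↦ filtration T N
  obtain ⟨k, ρ, hρ⟩ := Matrix.exists_exact_mulVecLin σ
  choose μ hμ hcorrect using exists_sub_smulVec_mem_filtration hT hcof hflat hρ
  have happrox : ∀ N, ∃ z, x - σ.smulVec z ∈ L' N := fun N ↦ by
    obtain ⟨M, -, hM⟩ := exists_sub_smulVec_mem_filtration hT hcof hflat hex N
    exact hM x (by rw [hx]; exact zero_mem _)
  obtain ⟨w₀, hw₀⟩ := happrox (μ 0)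
  refine exists_apply_eq_of_approx (L := L) (L' := L')
    (fun _ _ h ↦ Submodule.pi_mono fun _ _ ↦ filtration_antitone hT h)
    (fun y hy ↦ funext fun i ↦ eq_zero_of_forall_mem_filtration hcof fun N ↦ ?sep)
    (exists_limit_pi (exists_limit hT hcof)) (fun N _ ↦ Matrix.smulVec_mem_pi σ) hμ hw₀
    fun N w hw ↦ ?step
  case sep => exact (Submodule.mem_pi.mp (hy N)) i trivial
  case step =>
    obtain ⟨z, hz⟩ := happrox (max (μ N) (μ (N + 1)))
    have hzw : σ.smulVec (z - w) ∈ L' (μ N) := by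
      rw [map_sub,
        show σ.smulVec z - σ.smulVec w = (x - σ.smulVec w) - (x - σ.smulVec z) by abel]
      exact sub_mem hw
        (Submodule.pi_mono (fun _ _ ↦ filtration_antitone hT (le_max_left _ _)) hz)
    obtain ⟨u, hu⟩ := hcorrect N (z - w) hzw
    refine ⟨z - ρ.smulVec u, ?_, by rwa [sub_right_comm]⟩
    rw [map_sub, Matrix.smulVec_smulVec, Matrix.mul_eq_zero_of_exact hρ, Matrix.zero_smulVec,
      sub_zero]
    exact Submodule.pi_mono (fun _ _ ↦ filtration_antitone hT (le_max_right _ _)) hz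

end Chain

theorem exists_cofinal_dvd_chain (hS : Countable S) :
    ∃ T : ℕ → S, (∀ n, (T n : R) ∣ T (n + 1)) ∧ ∀ s : S, ∃ n, (s : R) ∣ T n := by
  obtain ⟨e, he⟩ := exists_surjective_nat S
  refine ⟨fun n ↦ ∏ k ∈ Finset.range n, e k, fun n ↦ ?_, fun s ↦ ?_⟩
  · simp [Finset.prod_range_succ]
  · obtain ⟨k, rfl⟩ := he s
    exact ⟨k + 1, by simp [Finset.prod_range_succ]⟩

theorem flat [IsNoetherianRing R] (hS : Countable S)
    (hflat : ∀ s : S, Module.Flat (R ⧸ Ideal.span {(s : R)}) (QuotBy F (s : R))) :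
    Module.Flat R (S.completion F) := by
  obtain ⟨T, hT, hcof⟩ := exists_cofinal_dvd_chain hS
  refine Module.Flat.of_forall_isTrivialRelation fun {l f x} hfx ↦ ?_
  obtain ⟨k, σ, hσ⟩ := Matrix.exists_exact_mulVecLin (Matrix.replicateRow Unit f)
  obtain ⟨X, hX⟩ := (exact_smulVec hT hcof hflat hσ x).mp (funext fun _ ↦ by simpa using hfx)
  refine ⟨k, σ, X, fun i ↦ by simp [← hX], fun j ↦ ?_⟩
  simpa [Matrix.mul_apply] using congrFun (congrFun (Matrix.mul_eq_zero_of_exact hσ) ()) j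

end Submonoid.completion

/-- Let `R` be Noetherian, `S ⊆ R` a countable multiplicative subset, and `F` an `R`-module
such that `F/sF` is a flat `R/sR`-module for every `s ∈ S`. Then the `S`-completion
`Λ(F) = lim_{s ∈ S} F/sF` (the projective limit over the divisibility preorder on `S`,
realized as the submodule of compatible families in `∏_{s ∈ S} F/sF`) is a flat
`R`-module. -/
theorem stmt12 (R : Type u) [CommRing R] [IsNoetherianRing R] (S : Submonoid R)
    (hS : Countable S) (F : Type u) [AddCommGroup F] [Module R F]
    (hflat : ∀ s : S,
      Module.Flat (R ⧸ Ideal.span {(s : R)}) (F ⧸ (Ideal.span {(s : R)} • ⊤ : Submodule R F))) :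
    let pr : ∀ s : S, (∀ u : S, F ⧸ (Ideal.span {(u : R)} • ⊤ : Submodule R F)) →ₗ[R]
        (F ⧸ (Ideal.span {(s : R)} • ⊤ : Submodule R F)) := fun s => LinearMap.proj s
    let q : ∀ (s t : S), (s : R) ∣ (t : R) →
        ((F ⧸ (Ideal.span {(t : R)} • ⊤ : Submodule R F)) →ₗ[R]
          (F ⧸ (Ideal.span {(s : R)} • ⊤ : Submodule R F))) := fun s t h =>
      Submodule.mapQ (Ideal.span {(t : R)} • ⊤) (Ideal.span {(s : R)} • ⊤)
        (LinearMap.id : F →ₗ[R] F)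
        (by
          rw [Submodule.comap_id]
          exact Submodule.smul_mono_left (Ideal.span_singleton_le_span_singleton.mpr h))
    let Λ : Submodule R (∀ s : S, F ⧸ (Ideal.span {(s : R)} • ⊤ : Submodule R F)) :=
      ⨅ (s : S) (t : S) (h : (s : R) ∣ (t : R)),
        LinearMap.ker ((q s t h).comp (pr t) - pr s)
    Module.Flat R Λ :=
  Submonoid.completion.flat hS hflat
end
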